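/- Let S be a polycyclic monoid endowed with a Hausdorff locally compact topology for which multiplication is jointly continuous (i.e., S is a locally compact topological semigroup). Then the topology of S is discrete. -/

import Mathlib

set_option linter.unusedSectionVars false
set_option linter.unusedVariables false


/-- A polycyclic monoid: an inverse monoid `S` with a two-sided zero `0 ≠ 1`
(encoded via `MonoidWithZero`), with inversion `inv` (the unique inverse
in the sense of inverse semigroups), generated (as a semigroup) by a set `Λ`
with `x * inv x = 1` for `x ∈ Λ` and `x * inv y = 0` for distinct `x, y ∈ Λ`. -/
structure IsPolycyclicMonoid (S : Type*) [MonoidWithZero S] (inv : S → S) (Λ : Set S) : Prop where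
  inv_inverse : ∀ a : S, a * inv a * a = a ∧ inv a * a * inv a = inv a
  inv_unique : ∀ a b : S, a * b * a = a → b * a * b = b → b = inv a
  zero_ne_one : (0 : S) ≠ 1
  gen_unit : ∀ x ∈ Λ, x * inv x = 1
  gen_zero : ∀ x ∈ Λ, ∀ y ∈ Λ, x ≠ y → x * inv y = 0
  generates : Subsemigroup.closure (Λ ∪ inv '' Λ) = ⊤

/-- The Green `R`-class of `u`: the set of `x` with `xS = uS`. -/
def greenR {S : Type*} [Mul S] (u : S) : Set S :=
  {x | {t | ∃ s, t = x * s} = {t | ∃ s, t = u * s}}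

namespace PolyAux

variable {S : Type*} [MonoidWithZero S]

/-- product of a word, list head innermost-right -/
def P : List S → S
  | [] => 1
  | z :: l => P l * z

/-- product of inverses of a word, list head innermost-left -/
def Q (f : S → S) : List S → S
  | [] => 1
  | z :: l => f z * Q f l

/-- normal form -/
def NN (f : S → S) (a b : List S) : S := Q f a * P b

/-- words over Λ -/
def Wl (Λ : Set S) (l : List S) : Prop := ∀ z ∈ l, z ∈ Λ

variable {f : S → S} {Λ : Set S}

lemma Wl_nil : Wl Λ ([] : List S) := fun z hz => absurd hz List.not_mem_nil

lemma Wl_cons {z : S} {l : List S} (hz : z ∈ Λ) (hl : Wl Λ l) : Wl Λ (z :: l) := by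
  intro u hu
  rcases List.mem_cons.mp hu with rfl | hu
  · exact hz
  · exact hl u hu

lemma Wl_head {z : S} {l : List S} (h : Wl Λ (z :: l)) : z ∈ Λ := h z List.mem_cons_self

lemma Wl_tail {z : S} {l : List S} (h : Wl Λ (z :: l)) : Wl Λ l :=
  fun u hu => h u (List.mem_cons_of_mem _ hu)

lemma Wl_append {l₁ l₂ : List S} (h₁ : Wl Λ l₁) (h₂ : Wl Λ l₂) : Wl Λ (l₁ ++ l₂) := by
  intro u hu
  rcases List.mem_append.mp hu with h | h
  · exact h₁ u h
  · exact h₂ u h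

lemma Wl_append_left {l₁ l₂ : List S} (h : Wl Λ (l₁ ++ l₂)) : Wl Λ l₁ :=
  fun u hu => h u (List.mem_append.mpr (Or.inl hu))

lemma Wl_append_right {l₁ l₂ : List S} (h : Wl Λ (l₁ ++ l₂)) : Wl Λ l₂ :=
  fun u hu => h u (List.mem_append.mpr (Or.inr hu))

lemma Wl_singleton {z : S} (hz : z ∈ Λ) : Wl Λ [z] := Wl_cons hz Wl_nil

lemma Wl_replicate {x : S} (hx : x ∈ Λ) (k : ℕ) : Wl Λ (List.replicate k x) :=
  fun u hu => (List.eq_of_mem_replicate hu) ▸ hx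

@[simp] lemma P_nil : P ([] : List S) = 1 := rfl
@[simp] lemma P_cons (z : S) (l : List S) : P (z :: l) = P l * z := rfl
@[simp] lemma Q_nil : Q f ([] : List S) = 1 := rfl
@[simp] lemma Q_cons (z : S) (l : List S) : Q f (z :: l) = f z * Q f l := rfl

lemma P_append (l₁ l₂ : List S) : P (l₁ ++ l₂) = P l₂ * P l₁ := by
  induction l₁ with
  | nil => simp
  | cons z l ih => simp [ih, mul_assoc]

lemma Q_append (l₁ l₂ : List S) : Q f (l₁ ++ l₂) = Q f l₁ * Q f l₂ := by
  induction l₁ with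
  | nil => simp
  | cons z l ih => simp [ih, mul_assoc]

variable (hS : IsPolycyclicMonoid S f Λ)
include hS

lemma PQ_self {l : List S} (hl : Wl Λ l) : P l * Q f l = 1 := by
  induction l with
  | nil => simp
  | cons z l ih =>
    have hz : z ∈ Λ := Wl_head hl
    calc P (z :: l) * Q f (z :: l) = P l * ((z * f z) * Q f l) := by
          simp [mul_assoc]
      _ = P l * Q f l := by rw [hS.gen_unit z hz, one_mul]
      _ = 1 := ih (Wl_tail hl)

lemma gen_ne_zero {x : S} (hx : x ∈ Λ) : x ≠ 0 := by
  intro h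
  have := hS.gen_unit x hx
  rw [h, zero_mul] at this
  exact hS.zero_ne_one this

lemma geninv_ne_zero {x : S} (hx : x ∈ Λ) : f x ≠ 0 := by
  intro h
  have := hS.gen_unit x hx
  rw [h, mul_zero] at this
  exact hS.zero_ne_one this

lemma NN_ne_zero {a b : List S} (ha : Wl Λ a) (hb : Wl Λ b) : NN f a b ≠ 0 := by
  intro h
  have h1 : P a * (NN f a b * Q f b) = 1 := by
    unfold NN
    calc P a * (Q f a * P b * Q f b) = P a * (Q f a * (P b * Q f b)) := by rw [mul_assoc]
      _ = P a * (Q f a * 1) := by rw [PQ_self hS hb]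
      _ = P a * Q f a := by rw [mul_one]
      _ = 1 := PQ_self hS ha
  rw [h, zero_mul, mul_zero] at h1
  exact hS.zero_ne_one h1

/-- fundamental trichotomy for `P b * Q f c`. -/
lemma trich : ∀ (b c : List S), Wl Λ b → Wl Λ c →
    (∃ w, b = c ++ w ∧ Wl Λ w ∧ P b * Q f c = P w) ∨
    (∃ w, c = b ++ w ∧ Wl Λ w ∧ P b * Q f c = Q f w) ∨
    ((∃ z ∈ Λ, ∃ z' ∈ Λ, z ≠ z') ∧ P b * Q f c = 0) := by
  intro b
  induction b with
  | nil =>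
    intro c _ hc
    refine Or.inr (Or.inl ⟨c, rfl, hc, ?_⟩)
    simp
  | cons z b ih =>
    intro c hb hc
    have hz : z ∈ Λ := Wl_head hb
    have hb' : Wl Λ b := Wl_tail hb
    cases c with
    | nil =>
      refine Or.inl ⟨z :: b, rfl, hb, ?_⟩
      simp
    | cons z' c =>
      have hz' : z' ∈ Λ := Wl_head hc
      have hc' : Wl Λ c := Wl_tail hc
      have key : P (z :: b) * Q f (z' :: c) = P b * ((z * f z') * Q f c) := by
        simp [mul_assoc]
      by_cases hzz : z = z'
      · subst hzz
        rw [hS.gen_unit z hz, one_mul] at key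
        rcases ih c hb' hc' with ⟨w, hw, hww, he⟩ | ⟨w, hw, hww, he⟩ | ⟨hwit, he⟩
        · exact Or.inl ⟨w, by rw [hw, List.cons_append], hww, by rw [key, he]⟩
        · exact Or.inr (Or.inl ⟨w, by rw [hw, List.cons_append], hww, by rw [key, he]⟩)
        · exact Or.inr (Or.inr ⟨hwit, by rw [key, he]⟩)
      · rw [hS.gen_zero z hz z' hz' hzz, zero_mul, mul_zero] at key
        exact Or.inr (Or.inr ⟨⟨z, hz, z', hz', hzz⟩, key⟩)

lemma mulNN₁ {a c w d : List S} (hc : Wl Λ c) :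
    NN f a (c ++ w) * NN f c d = NN f a (d ++ w) := by
  unfold NN
  rw [P_append, P_append]
  calc Q f a * (P w * P c) * (Q f c * P d)
      = Q f a * (P w * (P c * (Q f c * P d))) := by simp only [mul_assoc]
    _ = Q f a * (P w * ((P c * Q f c) * P d)) := by rw [← mul_assoc (P c)]
    _ = Q f a * (P w * P d) := by rw [PQ_self hS hc, one_mul]

lemma mulNN₂ {a b w d : List S} (hb : Wl Λ b) :
    NN f a b * NN f (b ++ w) d = NN f (a ++ w) d := by
  unfold NN
  rw [Q_append, Q_append]
  calc Q f a * P b * (Q f b * Q f w * P d)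
      = Q f a * (P b * (Q f b * (Q f w * P d))) := by simp only [mul_assoc]
    _ = Q f a * ((P b * Q f b) * (Q f w * P d)) := by rw [← mul_assoc (P b)]
    _ = Q f a * (Q f w * P d) := by rw [PQ_self hS hb, one_mul]
    _ = Q f a * Q f w * P d := by rw [mul_assoc]

lemma mulNN_exact {a p d : List S} (hp : Wl Λ p) :
    NN f a p * NN f p d = NN f a d := by
  have h := mulNN₁ (a := a) (c := p) (w := []) (d := d) hS hp
  simpa using h

lemma mulNN_zero {a b c d : List S} (h : P b * Q f c = 0) :
    NN f a b * NN f c d = 0 := by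
  unfold NN
  calc Q f a * P b * (Q f c * P d) = Q f a * ((P b * Q f c) * P d) := by
        simp only [mul_assoc]
    _ = 0 := by rw [h, zero_mul, mul_zero]

lemma surj : ∀ s : S, s = 0 ∨ ∃ a b, Wl Λ a ∧ Wl Λ b ∧ s = NN f a b := by
  intro s
  have hmem : s ∈ Subsemigroup.closure (Λ ∪ f '' Λ) := by
    rw [hS.generates]; trivial
  induction hmem using Subsemigroup.closure_induction with
  | mem z hz =>
    rcases hz with hz | ⟨u, hu, rfl⟩
    · refine Or.inr ⟨[], [z], Wl_nil, Wl_singleton hz, ?_⟩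
      simp [NN]
    · refine Or.inr ⟨[u], [], Wl_singleton hu, Wl_nil, ?_⟩
      simp [NN]
  | mul s t _ _ ihs iht =>
    rcases ihs with rfl | ⟨a, b, ha, hb, rfl⟩
    · left; rw [zero_mul]
    rcases iht with rfl | ⟨c, d, hc, hd, rfl⟩
    · left; rw [mul_zero]
    rcases trich hS b c hb hc with ⟨w, hw, hww, he⟩ | ⟨w, hw, hww, he⟩ | ⟨-, he⟩
    · refine Or.inr ⟨a, d ++ w, ha, Wl_append hd hww, ?_⟩
      rw [hw]
      exact mulNN₁ hS hc
    · refine Or.inr ⟨a ++ w, d, Wl_append ha hww, hd, ?_⟩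
      rw [hw]
      exact mulNN₂ hS hb
    · left; exact mulNN_zero hS he

lemma exists_two : ∃ x ∈ Λ, ∃ y ∈ Λ, x ≠ y := by
  by_contra hcon
  push_neg at hcon
  have hmul' : ∀ (a b c d : List S), Wl Λ a → Wl Λ b → Wl Λ c → Wl Λ d →
      ∃ e g, Wl Λ e ∧ Wl Λ g ∧ NN f a b * NN f c d = NN f e g := by
    intro a b c d ha hb hc hd
    rcases trich hS b c hb hc with ⟨w, hw, hww, he⟩ | ⟨w, hw, hww, he⟩ | ⟨⟨z, hz, z', hz', hne⟩, -⟩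
    · exact ⟨a, d ++ w, ha, Wl_append hd hww, by rw [hw]; exact mulNN₁ hS hc⟩
    · exact ⟨a ++ w, d, Wl_append ha hww, hd, by rw [hw]; exact mulNN₂ hS hb⟩
    · exact absurd (hcon z hz z' hz') hne
  let T : Subsemigroup S :=
    { carrier := {s | ∃ a b, Wl Λ a ∧ Wl Λ b ∧ s = NN f a b}
      mul_mem' := by
        rintro s t ⟨a, b, ha, hb, rfl⟩ ⟨c, d, hc, hd, rfl⟩
        obtain ⟨e, g, he, hg, heq⟩ := hmul' a b c d ha hb hc hd
        exact ⟨e, g, he, hg, heq⟩ }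
  have hgen : Λ ∪ f '' Λ ⊆ ↑T := by
    rintro z (hz | ⟨u, hu, rfl⟩)
    · exact ⟨[], [z], Wl_nil, Wl_singleton hz, by simp [NN]⟩
    · exact ⟨[u], [], Wl_singleton hu, Wl_nil, by simp [NN]⟩
  have h0T : (0 : S) ∈ T := by
    have h0 : (0 : S) ∈ Subsemigroup.closure (Λ ∪ f '' Λ) := by
      rw [hS.generates]; trivial
    exact Subsemigroup.closure_le.mpr hgen h0
  obtain ⟨a, b, ha, hb, h0⟩ := h0T
  exact NN_ne_zero hS ha hb h0.symm

lemma inv_mul_ne_one (htwo : ∃ x ∈ Λ, ∃ y ∈ Λ, x ≠ y) {z : S} (hz : z ∈ Λ) :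
    f z * z ≠ 1 := by
  intro h
  obtain ⟨x, hx, y, hy, hxy⟩ := htwo
  obtain ⟨u, hu, hzu⟩ : ∃ u ∈ Λ, z ≠ u := by
    rcases eq_or_ne z x with rfl | h'
    · exact ⟨y, hy, hxy⟩
    · exact ⟨x, hx, h'⟩
  have h1 : z * f u = 0 := hS.gen_zero z hz u hu hzu
  have h2 : f u = 0 := by
    calc f u = (f z * z) * f u := by rw [h, one_mul]
      _ = f z * (z * f u) := mul_assoc _ _ _
      _ = 0 := by rw [h1, mul_zero]
  have h3 : (1 : S) = 0 := by rw [← hS.gen_unit u hu, h2, mul_zero]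
  exact hS.zero_ne_one h3.symm

variable (htwo : ∃ x ∈ Λ, ∃ y ∈ Λ, x ≠ y)
include htwo

lemma P_eq_one {l : List S} (hl : Wl Λ l) (h : P l = 1) : l = [] := by
  cases l with
  | nil => rfl
  | cons z l =>
    exfalso
    have hz : z ∈ Λ := Wl_head hl
    rw [P_cons] at h
    have h2 : P l = f z := by
      have h1 := congrArg (· * f z) h
      simp only [one_mul] at h1
      rw [mul_assoc, hS.gen_unit z hz, mul_one] at h1
      exact h1
    rw [h2] at h
    exact inv_mul_ne_one hS htwo hz h

lemma Q_eq_one {l : List S} (hl : Wl Λ l) (h : Q f l = 1) : l = [] := by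
  cases l with
  | nil => rfl
  | cons z l =>
    exfalso
    have hz : z ∈ Λ := Wl_head hl
    rw [Q_cons] at h
    have h2 : Q f l = z := by
      have h1 := congrArg (z * ·) h
      simp only [mul_one] at h1
      rw [← mul_assoc, hS.gen_unit z hz, one_mul] at h1
      exact h1
    rw [h2] at h
    exact inv_mul_ne_one hS htwo hz h

lemma QP_eq_one {l : List S} (hl : Wl Λ l) (h : Q f l * P l = 1) : l = [] := by
  induction l with
  | nil => rfl
  | cons z l ih =>
    exfalso
    have hz : z ∈ Λ := Wl_head hl
    have hl' : Wl Λ l := Wl_tail hl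
    have key : Q f l * P l = 1 := by
      have h1 : z * (Q f (z :: l) * P (z :: l)) * f z = z * 1 * f z := by rw [h]
      rw [mul_one, hS.gen_unit z hz] at h1
      calc Q f l * P l
          = (z * f z) * (Q f l * (P l * (z * f z))) := by
            rw [hS.gen_unit z hz, one_mul, mul_one]
        _ = z * (Q f (z :: l) * P (z :: l)) * f z := by
            simp only [Q_cons, P_cons, mul_assoc]
        _ = 1 := h1
    have hnil : l = [] := ih hl' key
    subst hnil
    simp only [Q_cons, P_cons, Q_nil, P_nil, mul_one, one_mul] at h
    exact inv_mul_ne_one hS htwo hz h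

lemma QP_mixed_eq_one {w m : List S} (hw : Wl Λ w) (hm : Wl Λ m)
    (h : Q f w * P m = 1) : w = [] ∧ m = [] := by
  have h1 : P w = P m := by
    calc P w = P w * (Q f w * P m) := by rw [h, mul_one]
      _ = (P w * Q f w) * P m := (mul_assoc _ _ _).symm
      _ = P m := by rw [PQ_self hS hw, one_mul]
  have h2 : Q f w * P w = 1 := by rw [h1]; exact h
  have hwnil : w = [] := QP_eq_one hS htwo hw h2
  subst hwnil
  simp only [Q_nil, one_mul] at h
  exact ⟨rfl, P_eq_one hS htwo hm h⟩

lemma sand_base {a b : List S} (ha : Wl Λ a) (hb : Wl Λ b) :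
    P a * (NN f a b * Q f b) = 1 := by
  unfold NN
  calc P a * (Q f a * P b * Q f b)
      = P a * (Q f a * (P b * Q f b)) := by simp only [mul_assoc]
    _ = P a * (Q f a * 1) := by rw [PQ_self hS hb]
    _ = 1 := by rw [mul_one]; exact PQ_self hS ha

omit htwo in
lemma sand_mixed (a b c d : List S) :
    P a * (NN f c d * Q f b) = (P a * Q f c) * (P d * Q f b) := by
  unfold NN
  simp only [mul_assoc]

lemma NN_inj {a b c d : List S} (ha : Wl Λ a) (hb : Wl Λ b) (hc : Wl Λ c) (hd : Wl Λ d)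
    (h : NN f a b = NN f c d) : a = c ∧ b = d := by
  have sand1 : (P a * Q f c) * (P d * Q f b) = 1 := by
    rw [← sand_mixed hS a b c d, ← h]
    exact sand_base hS htwo ha hb
  have sand2 : (P c * Q f a) * (P b * Q f d) = 1 := by
    rw [← sand_mixed hS c d a b, h]
    exact sand_base hS htwo hc hd
  rcases trich hS a c ha hc with ⟨w₁, hw₁, hww₁, he₁⟩ | ⟨w₁, hw₁, hww₁, he₁⟩ | ⟨-, he₁⟩
  · -- a = c ++ w₁, P a * Q c = P w₁
    rcases trich hS d b hd hb with ⟨w₂, hw₂, hww₂, he₂⟩ | ⟨w₂, hw₂, hww₂, he₂⟩ | ⟨-, he₂⟩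
    · -- d = b ++ w₂, factor P w₂
      rw [he₁, he₂, ← P_append] at sand1
      have hnil := P_eq_one hS htwo (Wl_append hww₂ hww₁) sand1
      obtain ⟨h2, h1⟩ := List.append_eq_nil_iff.mp hnil
      subst h2; subst h1
      simp only [List.append_nil] at hw₁ hw₂
      exact ⟨hw₁, hw₂.symm⟩
    · -- b = d ++ w₂, factor Q w₂  : P w₁ * Q w₂ = 1
      rw [he₁, he₂] at sand1
      have hww : w₁ = w₂ := by
        rcases trich hS w₁ w₂ hww₁ hww₂ with ⟨v, hv, hvv, hev⟩ | ⟨v, hv, hvv, hev⟩ | ⟨-, hev⟩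
        · have : P v = 1 := by rw [← hev]; exact sand1
          have := P_eq_one hS htwo hvv this
          subst this; simpa using hv
        · have : Q f v = 1 := by rw [← hev]; exact sand1
          have := Q_eq_one hS htwo hvv this
          subst this; simpa using hv.symm
        · rw [hev] at sand1; exact absurd sand1 hS.zero_ne_one
      subst hww
      -- a = c ++ w₁, b = d ++ w₁ ; use sand2 to get w₁ = []
      rw [hw₁, hw₂] at sand2
      have e1 : P c * Q f (c ++ w₁) = Q f w₁ := by
        rw [Q_append, ← mul_assoc, PQ_self hS hc, one_mul]
      have e2 : P (d ++ w₁) * Q f d = P w₁ := by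
        rw [P_append, mul_assoc, PQ_self hS hd, mul_one]
      rw [e1, e2] at sand2
      have := QP_eq_one hS htwo hww₁ sand2
      subst this
      simp only [List.append_nil] at hw₁ hw₂
      exact ⟨hw₁, hw₂⟩
    · rw [he₁, he₂, mul_zero] at sand1
      exact absurd sand1 hS.zero_ne_one
  · -- c = a ++ w₁, factor Q w₁
    rcases trich hS d b hd hb with ⟨w₂, hw₂, hww₂, he₂⟩ | ⟨w₂, hw₂, hww₂, he₂⟩ | ⟨-, he₂⟩
    · -- factor P w₂ : Q w₁ * P w₂ = 1
      rw [he₁, he₂] at sand1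
      obtain ⟨h1, h2⟩ := QP_mixed_eq_one hS htwo hww₁ hww₂ sand1
      subst h1; subst h2
      simp only [List.append_nil] at hw₁ hw₂
      exact ⟨hw₁.symm, hw₂.symm⟩
    · -- factor Q w₂ : Q w₁ * Q w₂ = 1
      rw [he₁, he₂, ← Q_append] at sand1
      have hnil := Q_eq_one hS htwo (Wl_append hww₁ hww₂) sand1
      obtain ⟨h1, h2⟩ := List.append_eq_nil_iff.mp hnil
      subst h1; subst h2
      simp only [List.append_nil] at hw₁ hw₂
      exact ⟨hw₁.symm, hw₂⟩
    · rw [he₁, he₂, mul_zero] at sand1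
      exact absurd sand1 hS.zero_ne_one
  · rw [he₁, zero_mul] at sand1
    exact absurd sand1 hS.zero_ne_one

/-! ### single-generator multiplication rules -/

omit htwo

lemma mulL_cancel {z : S} (hz : z ∈ Λ) (c d : List S) :
    z * NN f (z :: c) d = NN f c d := by
  unfold NN
  rw [Q_cons, ← mul_assoc, ← mul_assoc, hS.gen_unit z hz, one_mul]

omit hS in
lemma mulL_nil (z : S) (d : List S) : z * NN f [] d = NN f [] (d ++ [z]) := by
  unfold NN
  rw [P_append]
  simp [mul_assoc]

lemma mulL_zero {w z : S} (hw : w ∈ Λ) (hz : z ∈ Λ) (hne : w ≠ z) (c d : List S) :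
    w * NN f (z :: c) d = 0 := by
  unfold NN
  rw [Q_cons, ← mul_assoc, ← mul_assoc, hS.gen_zero w hw z hz hne, zero_mul, zero_mul]

lemma mulR_cancel {z : S} (hz : z ∈ Λ) (c d : List S) :
    NN f c (z :: d) * f z = NN f c d := by
  unfold NN
  rw [P_cons]
  simp only [mul_assoc]
  rw [hS.gen_unit z hz, mul_one]

omit hS in
lemma mulR_nil (z : S) (c : List S) : NN f c [] * f z = NN f (c ++ [z]) [] := by
  unfold NN
  rw [Q_append]
  simp [mul_assoc]

lemma mulR_zero {w z : S} (hw : w ∈ Λ) (hz : z ∈ Λ) (hne : w ≠ z) (c d : List S) :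
    NN f c (w :: d) * f z = 0 := by
  unfold NN
  rw [P_cons]
  simp only [mul_assoc]
  rw [hS.gen_zero w hw z hz hne, mul_zero, mul_zero]

omit hS in
lemma NN_nil_nil : NN f ([] : List S) [] = 1 := by simp [NN]

/-! ### topology: isolated points -/

section Topo

variable [TopologicalSpace S] [T2Space S]
  (hmul : Continuous (fun p : S × S => p.1 * p.2))
include hmul

omit hS in
lemma contL (g : S) : Continuous (fun t : S => g * t) :=
  hmul.comp (continuous_const.prodMk continuous_id)

omit hS in
lemma contR (g : S) : Continuous (fun t : S => t * g) :=
  hmul.comp (continuous_id.prodMk continuous_const)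

omit hS hmul in
lemma isolated_aux {g : S → S} (hg : Continuous g)
    {c t₀ : S} (hc : IsOpen {c}) (hfix : g t₀ = c) {E : Set S} (hE : E.Finite)
    (hpre : ∀ t, g t = c → t = t₀ ∨ t ∈ E) : IsOpen {t₀} := by
  have heq : ({t₀} : Set S) = g ⁻¹' {c} ∩ (E \ {t₀})ᶜ := by
    ext t
    simp only [Set.mem_singleton_iff, Set.mem_inter_iff, Set.mem_preimage,
      Set.mem_compl_iff, Set.mem_diff]
    constructor
    · rintro rfl
      exact ⟨hfix, fun h => h.2 rfl⟩
    · rintro ⟨h1, h2⟩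
      rcases hpre t h1 with h | h
      · exact h
      · by_contra hne
        exact h2 ⟨h, hne⟩
  rw [heq]
  exact (hc.preimage hg).inter (Set.Finite.diff hE : (E \ {t₀}).Finite).isClosed.isOpen_compl

lemma one_isolated (htwo : ∃ x ∈ Λ, ∃ y ∈ Λ, x ≠ y) : IsOpen {(1 : S)} := by
  obtain ⟨x, hx, y, hy, hxy⟩ := htwo
  set U : Set S := ((fun t => x * t) ⁻¹' {0}ᶜ) ∩ ((fun t => y * t) ⁻¹' {0}ᶜ) ∩
      (((fun t => t * f x) ⁻¹' {0}ᶜ) ∩ ((fun t => t * f y) ⁻¹' {0}ᶜ)) with hU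
  have hUopen : IsOpen U := by
    refine IsOpen.inter (IsOpen.inter ?_ ?_) (IsOpen.inter ?_ ?_)
    · exact isOpen_compl_singleton.preimage (contL hmul x)
    · exact isOpen_compl_singleton.preimage (contL hmul y)
    · exact isOpen_compl_singleton.preimage (contR hmul (f x))
    · exact isOpen_compl_singleton.preimage (contR hmul (f y))
  have hUeq : U = {1} := by
    ext t
    simp only [hU, Set.mem_inter_iff, Set.mem_preimage, Set.mem_compl_iff,
      Set.mem_singleton_iff]
    constructor
    · rintro ⟨⟨h1, h2⟩, h3, h4⟩
      rcases surj hS t with rfl | ⟨a, b, ha, hb, rfl⟩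
      · exact absurd (mul_zero x) h1
      · cases a with
        | cons z a' =>
          exfalso
          have hz : z ∈ Λ := Wl_head ha
          rcases eq_or_ne z x with rfl | hne
          · exact h2 (mulL_zero hS hy hx (Ne.symm hxy) a' b)
          · exact h1 (mulL_zero hS hx hz (Ne.symm hne) a' b)
        | nil =>
          cases b with
          | cons z b' =>
            exfalso
            have hz : z ∈ Λ := Wl_head hb
            rcases eq_or_ne z x with rfl | hne
            · exact h4 (mulR_zero hS hx hy hxy [] b')
            · exact h3 (mulR_zero hS hz hx hne [] b')
          | nil => exact NN_nil_nil
    · rintro rfl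
      refine ⟨⟨?_, ?_⟩, ?_, ?_⟩
      · rw [mul_one]; exact gen_ne_zero hS hx
      · rw [mul_one]; exact gen_ne_zero hS hy
      · rw [one_mul]; exact geninv_ne_zero hS hx
      · rw [one_mul]; exact geninv_ne_zero hS hy
  rw [← hUeq]
  exact hUopen

variable (htwo : ∃ x ∈ Λ, ∃ y ∈ Λ, x ≠ y)
include htwo

lemma ext_a {a b : List S} {z : S} (hz : z ∈ Λ) (ha : Wl Λ a) (hb : Wl Λ b)
    (hopen : IsOpen {NN f a b}) : IsOpen {NN f (z :: a) b} := by
  refine isolated_aux (g := fun t => z * t) (contL hmul z) hopen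
      (mulL_cancel hS hz a b) (Set.finite_singleton (NN f [] b.dropLast)) ?_
  intro t ht
  rcases surj hS t with rfl | ⟨c, d, hc, hd, rfl⟩
  · rw [mul_zero] at ht
    exact absurd ht.symm (NN_ne_zero hS ha hb)
  · cases c with
    | nil =>
      rw [mulL_nil] at ht
      obtain ⟨h1, h2⟩ := NN_inj hS htwo Wl_nil (Wl_append hd (Wl_singleton hz)) ha hb ht
      right
      have hd2 : b.dropLast = d := by rw [← h2]; simp
      rw [Set.mem_singleton_iff, hd2, h1]
    | cons z' c' =>
      have hz' : z' ∈ Λ := Wl_head hc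
      rcases eq_or_ne z z' with rfl | hne
      · rw [mulL_cancel hS hz] at ht
        obtain ⟨h1, h2⟩ := NN_inj hS htwo (Wl_tail hc) hd ha hb ht
        left
        rw [h1, h2]
      · rw [mulL_zero hS hz hz' hne] at ht
        exact absurd ht.symm (NN_ne_zero hS ha hb)

lemma ext_b {a b : List S} {z : S} (hz : z ∈ Λ) (ha : Wl Λ a) (hb : Wl Λ b)
    (hopen : IsOpen {NN f a b}) : IsOpen {NN f a (z :: b)} := by
  refine isolated_aux (g := fun t => t * f z) (contR hmul (f z)) hopen
      (mulR_cancel hS hz a b) (Set.finite_singleton (NN f a.dropLast [])) ?_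
  intro t ht
  rcases surj hS t with rfl | ⟨c, d, hc, hd, rfl⟩
  · rw [zero_mul] at ht
    exact absurd ht.symm (NN_ne_zero hS ha hb)
  · cases d with
    | nil =>
      rw [mulR_nil] at ht
      obtain ⟨h1, h2⟩ := NN_inj hS htwo (Wl_append hc (Wl_singleton hz)) Wl_nil ha hb ht
      right
      have hc2 : a.dropLast = c := by rw [← h1]; simp
      rw [Set.mem_singleton_iff, hc2, h2]
    | cons z' d' =>
      have hz' : z' ∈ Λ := Wl_head hd
      rcases eq_or_ne z' z with rfl | hne
      · rw [mulR_cancel hS hz] at ht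
        obtain ⟨h1, h2⟩ := NN_inj hS htwo hc (Wl_tail hd) ha hb ht
        left
        rw [h1, h2]
      · rw [mulR_zero hS hz' hz hne] at ht
        exact absurd ht.symm (NN_ne_zero hS ha hb)

lemma open_NN_nil : ∀ (a : List S), Wl Λ a → IsOpen {NN f a ([] : List S)} := by
  intro a
  induction a with
  | nil =>
    intro _
    rw [NN_nil_nil]
    exact one_isolated hS hmul htwo
  | cons z a ih =>
    intro ha
    exact ext_a hS htwo hmul (Wl_head ha) (Wl_tail ha) Wl_nil (ih (Wl_tail ha))

lemma open_NN : ∀ (b a : List S), Wl Λ a → Wl Λ b → IsOpen {NN f a b} := by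
  intro b
  induction b with
  | nil => intro a ha _; exact open_NN_nil hS htwo hmul a ha
  | cons z b ih =>
    intro a ha hb
    exact ext_b hS htwo hmul (Wl_head hb) ha (Wl_tail hb) (ih a ha (Wl_tail hb))

end Topo

/-! ### Part B : the zero is isolated -/

section Zero

variable [TopologicalSpace S] [T2Space S]

omit hS in
lemma compact_isolated_finite {C : Set S} (hC : IsCompact C)
    (h : ∀ t ∈ C, IsOpen ({t} : Set S)) : C.Finite := by
  obtain ⟨t, ht⟩ := hC.elim_finite_subcover (fun i : C => ({(i : S)} : Set S))
    (fun i => h i i.2) (fun s hs => Set.mem_iUnion.mpr ⟨⟨s, hs⟩, rfl⟩)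
  exact (t.finite_toSet.biUnion (fun i _ => Set.finite_singleton _)).subset ht

omit hS [T2Space S] in
/-- Orbit dichotomy: iterating a continuous 0-fixing map on an infinite subset of `V`,
either some orbit stays in `V` forever, or infinitely many points are eventually
mapped to one common point of `V`. -/
lemma dich {π : S → S} (hπ : Continuous π) (hπ0 : π 0 = 0)
    {V : Set S} (hV : IsOpen V) (h0V : (0 : S) ∈ V)
    (cofin : ∀ V' : Set S, IsOpen V' → (0 : S) ∈ V' → (V \ V').Finite)
    {𝒮 : Set S} (hs : 𝒮.Infinite) (hsV : 𝒮 ⊆ V) :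
    (∃ s ∈ 𝒮, ∀ k, π^[k] s ∈ V) ∨
      (∃ b₀ ∈ V, Set.Infinite {s ∈ 𝒮 | ∃ k, π^[k] s = b₀}) := by
  classical
  by_contra hcon
  push_neg at hcon
  obtain ⟨h1, h2⟩ := hcon
  have hBfin : (V \ π ⁻¹' V).Finite := by
    refine cofin _ (hV.preimage hπ) ?_
    simp only [Set.mem_preimage, hπ0]
    exact h0V
  have key : ∀ s ∈ 𝒮, ∃ b ∈ V \ π ⁻¹' V, ∃ k, π^[k] s = b := by
    intro s hsm
    obtain ⟨k, hk⟩ := h1 s hsm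
    have hex : ∃ n, π^[n] s ∉ V := ⟨k, hk⟩
    have hspec : π^[Nat.find hex] s ∉ V := Nat.find_spec hex
    have hn0 : Nat.find hex ≠ 0 := by
      intro h
      rw [h] at hspec
      exact hspec (hsV hsm)
    obtain ⟨m, hm⟩ := Nat.exists_eq_succ_of_ne_zero hn0
    have hmem : π^[m] s ∈ V := by
      by_contra hmV
      exact (Nat.find_min hex (by omega)) hmV
    refine ⟨π^[m] s, ⟨hmem, ?_⟩, m, rfl⟩
    intro hpre
    have : π^[m + 1] s ∈ V := by
      rwa [Function.iterate_succ_apply']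
    rw [← Nat.succ_eq_add_one, ← hm] at this
    exact hspec this
  have hsub : 𝒮 ⊆ ⋃ b ∈ V \ π ⁻¹' V, {s ∈ 𝒮 | ∃ k, π^[k] s = b} := by
    intro s hsm
    obtain ⟨b, hb, k, hk⟩ := key s hsm
    exact Set.mem_biUnion hb ⟨hsm, k, hk⟩
  refine hs ?_
  refine (hBfin.biUnion (fun b hb => ?_)).subset hsub
  exact h2 b hb.1

omit [T2Space S] in
lemma iterL (x : S) (k : ℕ) (a b : List S) :
    (fun t : S => f x * t)^[k] (NN f a b) = NN f (List.replicate k x ++ a) b := by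
  induction k with
  | zero => simp
  | succ k ih =>
    rw [Function.iterate_succ_apply', ih]
    show f x * NN f (List.replicate k x ++ a) b = _
    rw [List.replicate_succ, List.cons_append]
    unfold NN
    rw [Q_cons, mul_assoc]

omit [T2Space S] in
lemma iterR (x : S) (k : ℕ) (a b : List S) :
    (fun t : S => t * x)^[k] (NN f a b) = NN f a (List.replicate k x ++ b) := by
  induction k with
  | zero => simp
  | succ k ih =>
    rw [Function.iterate_succ_apply', ih]
    show NN f a (List.replicate k x ++ b) * x = _
    rw [List.replicate_succ, List.cons_append]
    unfold NN
    rw [P_cons, mul_assoc]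

omit hS in
lemma rep_inj {x : S} {a : List S} {k k' : ℕ}
    (h : List.replicate k x ++ a = List.replicate k' x ++ a) : k = k' := by
  have := congrArg List.length h
  simpa using this

variable (htwo : ∃ x ∈ Λ, ∃ y ∈ Λ, x ≠ y)
    (hmul : Continuous (fun p : S × S => p.1 * p.2))
include htwo hmul

lemma open_zero [LocallyCompactSpace S] : IsOpen ({(0 : S)} : Set S) := by
  classical
  by_contra h0
  obtain ⟨x, hx, y, hy, hxy⟩ := exists_two hS
  -- all nonzero points are isolated
  have hiso : ∀ s : S, s ≠ 0 → IsOpen ({s} : Set S) := by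
    intro s hs
    rcases surj hS s with rfl | ⟨a, b, ha, hb, rfl⟩
    · exact absurd rfl hs
    · exact open_NN hS htwo hmul b a ha hb
  -- compact neighbourhood of 0 and its interior V
  obtain ⟨K, hK, -, hKc⟩ :=
    LocallyCompactSpace.local_compact_nhds (0 : S) Set.univ Filter.univ_mem
  set V : Set S := interior K with hVdef
  have hV : IsOpen V := isOpen_interior
  have h0V : (0 : S) ∈ V := mem_interior_iff_mem_nhds.mpr hK
  have cofin : ∀ V' : Set S, IsOpen V' → (0 : S) ∈ V' → (V \ V').Finite := by
    intro V' hV' h0V'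
    have hsub : V \ V' ⊆ K \ V' := fun t ht => ⟨interior_subset ht.1, ht.2⟩
    refine (compact_isolated_finite (hKc.diff hV') ?_).subset hsub
    intro t ht
    refine hiso t ?_
    intro h
    rw [h] at ht
    exact ht.2 h0V'
  -- V \ {0} is infinite
  have hVinf : (V \ {0}).Infinite := by
    by_contra hfin
    rw [Set.not_infinite] at hfin
    apply h0
    have heq : ({0} : Set S) = V \ (V \ {0}) := by
      ext t
      simp only [Set.mem_singleton_iff, Set.mem_diff, not_and, not_not]
      constructor
      · rintro rfl
        exact ⟨h0V, fun _ => rfl⟩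
      · rintro ⟨htV, himp⟩
        exact himp htV
    rw [heq]
    exact hV.sdiff hfin.isClosed
  -- Phase (a): an infinite family with constant positive part
  have P2 : ∃ B₀, Wl Λ B₀ ∧
      Set.Infinite {t | t ∈ V ∧ ∃ a, Wl Λ a ∧ t = NN f a B₀} := by
    rcases dich (contL hmul (f x)) (mul_zero (f x)) hV h0V cofin hVinf
        Set.diff_subset with ⟨s, hsmem, horb⟩ | ⟨b₀, hb₀V, hb₀⟩
    · obtain ⟨a₀, B₀, ha₀, hB₀, rfl⟩ := (surj hS s).resolve_left hsmem.2
      refine ⟨B₀, hB₀, ?_⟩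
      refine Set.infinite_of_injective_forall_mem
        (f := fun k : ℕ => NN f (List.replicate k x ++ a₀) B₀) ?_ ?_
      · intro k k' hkk
        obtain ⟨h1, -⟩ := NN_inj hS htwo (Wl_append (Wl_replicate hx k) ha₀)
          hB₀ (Wl_append (Wl_replicate hx k') ha₀) hB₀ hkk
        exact rep_inj h1
      · intro k
        refine ⟨?_, List.replicate k x ++ a₀, Wl_append (Wl_replicate hx k) ha₀, rfl⟩
        have := horb k
        rwa [iterL hS x k a₀ B₀] at this
    · obtain ⟨sb, ⟨hsbmem, kb, hkb⟩⟩ := hb₀.nonempty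
      obtain ⟨ab, B₀, hab, hB₀, rfl⟩ := (surj hS sb).resolve_left hsbmem.2
      refine ⟨B₀, hB₀, hb₀.mono ?_⟩
      rintro s ⟨hsmem, k, hk⟩
      obtain ⟨a, b, ha, hb, rfl⟩ := (surj hS s).resolve_left hsmem.2
      rw [iterL hS x k a b] at hk
      rw [iterL hS x kb ab B₀] at hkb
      have heq : NN f (List.replicate k x ++ a) b
          = NN f (List.replicate kb x ++ ab) B₀ := by rw [hk, hkb]
      obtain ⟨-, h2⟩ := NN_inj hS htwo (Wl_append (Wl_replicate hx k) ha) hb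
        (Wl_append (Wl_replicate hx kb) hab) hB₀ heq
      exact ⟨hsmem.1, a, ha, by rw [h2]⟩
  obtain ⟨B₀, hB₀, hA⟩ := P2
  -- Phase (b): an infinite family with positive part [x]
  have hA' : Set.Infinite {t | t ∈ V ∧ ∃ a, Wl Λ a ∧ t = NN f a [x]} := by
    have hρc : Continuous (fun t : S => t * NN f B₀ [x]) := contR hmul _
    have hD : (V \ (fun t : S => t * NN f B₀ [x]) ⁻¹' V).Finite := by
      refine cofin _ (hV.preimage hρc) ?_
      simp only [Set.mem_preimage, zero_mul]
      exact h0V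
    refine Set.Infinite.mono ?_
      (Set.Infinite.image (f := fun t : S => t * NN f B₀ [x]) ?_ (hA.diff hD))
    · rintro u ⟨t, ⟨⟨htV, a, ha, rfl⟩, htD⟩, rfl⟩
      have himg : NN f a B₀ * NN f B₀ [x] = NN f a [x] := mulNN_exact hS hB₀
      constructor
      · have hmem : NN f a B₀ ∈ (fun t : S => t * NN f B₀ [x]) ⁻¹' V := by
          by_contra hc
          exact htD ⟨htV, hc⟩
        simpa [himg] using hmem
      · exact ⟨a, ha, (by dsimp only; rw [himg])⟩
    · rintro t ⟨⟨-, a, ha, rfl⟩, -⟩ t' ⟨⟨-, a', ha', rfl⟩, -⟩ hh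
      dsimp only at hh
      rw [mulNN_exact hS hB₀, mulNN_exact hS hB₀] at hh
      obtain ⟨h1, -⟩ := NN_inj hS htwo ha (Wl_singleton hx) ha' (Wl_singleton hx) hh
      rw [h1]
  -- Phase (c): constant negative part with arbitrarily long x-power positive parts
  obtain ⟨A₁, hA₁, hUorb⟩ : ∃ A₁, Wl Λ A₁ ∧
      ∀ k, NN f A₁ (List.replicate k x ++ [x]) ∈ V := by
    rcases dich (contR hmul x) (zero_mul x) hV h0V cofin hA'
        (fun t ht => ht.1) with ⟨s, ⟨hsV, a, ha, rfl⟩, horb⟩ | ⟨b₀, hb₀V, hb₀⟩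
    · refine ⟨a, ha, fun k => ?_⟩
      have := horb k
      rwa [iterR hS x k a [x]] at this
    · exfalso
      obtain ⟨s, hs, s', hs', hne⟩ := hb₀.nontrivial
      obtain ⟨⟨-, a, ha, hsa⟩, k, hk⟩ := hs
      obtain ⟨⟨-, a', ha', hsa'⟩, k', hk'⟩ := hs'
      subst hsa; subst hsa'
      rw [iterR hS x k a [x]] at hk
      rw [iterR hS x k' a' [x]] at hk'
      have heq : NN f a (List.replicate k x ++ [x])
          = NN f a' (List.replicate k' x ++ [x]) := by rw [hk, hk']
      obtain ⟨h1, -⟩ := NN_inj hS htwo ha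
        (Wl_append (Wl_replicate hx k) (Wl_singleton hx)) ha'
        (Wl_append (Wl_replicate hx k') (Wl_singleton hx)) heq
      exact hne (by rw [h1])
  -- Phase (a'): an infinite family with constant negative part
  have Q2 : ∃ A₂, Wl Λ A₂ ∧
      Set.Infinite {t | t ∈ V ∧ ∃ b, Wl Λ b ∧ t = NN f A₂ b} := by
    rcases dich (contR hmul x) (zero_mul x) hV h0V cofin hVinf
        Set.diff_subset with ⟨s, hsmem, horb⟩ | ⟨b₀, hb₀V, hb₀⟩
    · obtain ⟨A₂, b₀, hA₂, hb₀w, rfl⟩ := (surj hS s).resolve_left hsmem.2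
      refine ⟨A₂, hA₂, ?_⟩
      refine Set.infinite_of_injective_forall_mem
        (f := fun k : ℕ => NN f A₂ (List.replicate k x ++ b₀)) ?_ ?_
      · intro k k' hkk
        obtain ⟨-, h2⟩ := NN_inj hS htwo hA₂
          (Wl_append (Wl_replicate hx k) hb₀w) hA₂
          (Wl_append (Wl_replicate hx k') hb₀w) hkk
        exact rep_inj h2
      · intro k
        refine ⟨?_, List.replicate k x ++ b₀, Wl_append (Wl_replicate hx k) hb₀w, rfl⟩
        have := horb k
        rwa [iterR hS x k A₂ b₀] at this
    · obtain ⟨sb, ⟨hsbmem, kb, hkb⟩⟩ := hb₀.nonempty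
      obtain ⟨A₂, bb, hA₂, hbb, rfl⟩ := (surj hS sb).resolve_left hsbmem.2
      refine ⟨A₂, hA₂, hb₀.mono ?_⟩
      rintro s ⟨hsmem, k, hk⟩
      obtain ⟨a, b, ha, hb, rfl⟩ := (surj hS s).resolve_left hsmem.2
      rw [iterR hS x k a b] at hk
      rw [iterR hS x kb A₂ bb] at hkb
      have heq : NN f a (List.replicate k x ++ b)
          = NN f A₂ (List.replicate kb x ++ bb) := by rw [hk, hkb]
      obtain ⟨h1, -⟩ := NN_inj hS htwo ha (Wl_append (Wl_replicate hx k) hb)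
        hA₂ (Wl_append (Wl_replicate hx kb) hbb) heq
      exact ⟨hsmem.1, b, hb, by rw [h1]⟩
  obtain ⟨A₂, hA₂, hB⟩ := Q2
  -- Phase (b'): an infinite family with negative part [x]
  have hB' : Set.Infinite {t | t ∈ V ∧ ∃ b, Wl Λ b ∧ t = NN f [x] b} := by
    have hlamc : Continuous (fun t : S => NN f [x] A₂ * t) := contL hmul _
    have hD : (V \ (fun t : S => NN f [x] A₂ * t) ⁻¹' V).Finite := by
      refine cofin _ (hV.preimage hlamc) ?_
      simp only [Set.mem_preimage, mul_zero]
      exact h0V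
    refine Set.Infinite.mono ?_
      (Set.Infinite.image (f := fun t : S => NN f [x] A₂ * t) ?_ (hB.diff hD))
    · rintro u ⟨t, ⟨⟨htV, b, hb, rfl⟩, htD⟩, rfl⟩
      have himg : NN f [x] A₂ * NN f A₂ b = NN f [x] b := mulNN_exact hS hA₂
      constructor
      · have hmem : NN f A₂ b ∈ (fun t : S => NN f [x] A₂ * t) ⁻¹' V := by
          by_contra hc
          exact htD ⟨htV, hc⟩
        simpa [himg] using hmem
      · exact ⟨b, hb, (by dsimp only; rw [himg])⟩
    · rintro t ⟨⟨-, b, hb, rfl⟩, -⟩ t' ⟨⟨-, b', hb', rfl⟩, -⟩ hh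
      dsimp only at hh
      rw [mulNN_exact hS hA₂, mulNN_exact hS hA₂] at hh
      obtain ⟨-, h2⟩ := NN_inj hS htwo (Wl_singleton hx) hb (Wl_singleton hx) hb' hh
      rw [h2]
  -- Phase (c'): constant positive part with arbitrarily long x-power negative parts
  obtain ⟨B₂, hB₂, hVorb⟩ : ∃ B₂, Wl Λ B₂ ∧
      ∀ k, NN f (List.replicate k x ++ [x]) B₂ ∈ V := by
    rcases dich (contL hmul (f x)) (mul_zero (f x)) hV h0V cofin hB'
        (fun t ht => ht.1) with ⟨s, ⟨hsV, b, hb, rfl⟩, horb⟩ | ⟨b₀, hb₀V, hb₀⟩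
    · refine ⟨b, hb, fun k => ?_⟩
      have := horb k
      rwa [iterL hS x k [x] b] at this
    · exfalso
      obtain ⟨s, hs, s', hs', hne⟩ := hb₀.nontrivial
      obtain ⟨⟨-, b, hb, hsb⟩, k, hk⟩ := hs
      obtain ⟨⟨-, b', hb', hsb'⟩, k', hk'⟩ := hs'
      subst hsb; subst hsb'
      rw [iterL hS x k [x] b] at hk
      rw [iterL hS x k' [x] b'] at hk'
      have heq : NN f (List.replicate k x ++ [x]) b
          = NN f (List.replicate k' x ++ [x]) b' := by rw [hk, hk']
      obtain ⟨-, h2⟩ := NN_inj hS htwo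
        (Wl_append (Wl_replicate hx k) (Wl_singleton hx)) hb
        (Wl_append (Wl_replicate hx k') (Wl_singleton hx)) hb' heq
      exact hne (by rw [h2])
  -- Finale : the constant product N A₁ B₂ contradicts joint continuity at (0,0)
  set s₀ : S := NN f A₁ B₂ with hs₀def
  have hs₀ : s₀ ≠ 0 := NN_ne_zero hS hA₁ hB₂
  have hT : IsOpen ((fun p : S × S => p.1 * p.2) ⁻¹' ({s₀}ᶜ : Set S)) :=
    isOpen_compl_singleton.preimage hmul
  have h00 : ((0 : S), (0 : S)) ∈ (fun p : S × S => p.1 * p.2) ⁻¹' ({s₀}ᶜ : Set S) := by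
    simp only [Set.mem_preimage, Set.mem_compl_iff, Set.mem_singleton_iff]
    intro h
    exact hs₀ (by rw [← h, zero_mul])
  obtain ⟨V₁, V₂, hV₁, hV₂, h0V₁, h0V₂, hsubT⟩ := isOpen_prod_iff.mp hT 0 0 h00
  -- the two sequences
  set U : ℕ → S := fun k => NN f A₁ (List.replicate k x ++ [x]) with hUdef
  set Vv : ℕ → S := fun k => NN f (List.replicate k x ++ [x]) B₂ with hVvdef
  have hUinj : Function.Injective U := by
    intro k k' hkk
    obtain ⟨-, h2⟩ := NN_inj hS htwo hA₁
      (Wl_append (Wl_replicate hx k) (Wl_singleton hx)) hA₁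
      (Wl_append (Wl_replicate hx k') (Wl_singleton hx)) hkk
    exact rep_inj h2
  have hVvinj : Function.Injective Vv := by
    intro k k' hkk
    obtain ⟨h1, -⟩ := NN_inj hS htwo
      (Wl_append (Wl_replicate hx k) (Wl_singleton hx)) hB₂
      (Wl_append (Wl_replicate hx k') (Wl_singleton hx)) hB₂ hkk
    exact rep_inj h1
  have hfin₁ : {k : ℕ | U k ∉ V₁}.Finite := by
    have hsub : {k : ℕ | U k ∉ V₁} ⊆ U ⁻¹' (V \ V₁) :=
      fun k hk => ⟨hUorb k, hk⟩
    exact ((cofin V₁ hV₁ h0V₁).preimage (hUinj.injOn)).subset hsub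
  have hfin₂ : {k : ℕ | Vv k ∉ V₂}.Finite := by
    have hsub : {k : ℕ | Vv k ∉ V₂} ⊆ Vv ⁻¹' (V \ V₂) :=
      fun k hk => ⟨hVorb k, hk⟩
    exact ((cofin V₂ hV₂ h0V₂).preimage (hVvinj.injOn)).subset hsub
  obtain ⟨k, hk⟩ := (hfin₁.union hfin₂).infinite_compl.nonempty
  simp only [Set.mem_compl_iff, Set.mem_union, Set.mem_setOf_eq, not_or, not_not] at hk
  have hmemT : (U k, Vv k) ∈ (fun p : S × S => p.1 * p.2) ⁻¹' ({s₀}ᶜ : Set S) :=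
    hsubT ⟨hk.1, hk.2⟩
  simp only [Set.mem_preimage, Set.mem_compl_iff, Set.mem_singleton_iff] at hmemT
  refine hmemT ?_
  show NN f A₁ (List.replicate k x ++ [x]) * NN f (List.replicate k x ++ [x]) B₂ = s₀
  rw [mulNN_exact hS (Wl_append (Wl_replicate hx k) (Wl_singleton hx))]

end Zero

end PolyAux

/-- A Hausdorff locally compact topological (jointly continuous
multiplication) polycyclic monoid is discrete. -/
theorem stmt1 {S : Type*} [MonoidWithZero S] (inv : S → S) (Λ : Set S)
    (hS : IsPolycyclicMonoid S inv Λ)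
    [TopologicalSpace S] [T2Space S] [LocallyCompactSpace S]
    (hmul : Continuous (fun p : S × S => p.1 * p.2)) :
    DiscreteTopology S := by
  have htwo := PolyAux.exists_two hS
  refine discreteTopology_iff_isOpen_singleton.mpr ?_
  intro s
  rcases PolyAux.surj hS s with rfl | ⟨a, b, ha, hb, rfl⟩
  · exact PolyAux.open_zero hS htwo hmul
  · exact PolyAux.open_NN hS htwo hmul b a ha hb
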